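/- arXiv:1211.3110 — 9 statements merged into one kernel-verified Lean document; each statement's English description precedes it below -/
import Mathlib

section
/- For every positive integer K, the product of factorials ∏_{k=0}^{K−1} k! is at least exp(K²·log(K)/2 − 3K²/4). -/
/-!
Write `E x = x² log x / 2 - 3x²/4`, so that the claim reads `E K ≤ ∑_{k<K} log k!`. Telescoping,
it suffices that `E (k + 1) - E k ≤ log k!` for every `k`. Bounding `log (k + 1) ≤ log k + 1/k`,
the increment is at most `k log k - k + log k / 2 + 3/4`, and Stirling's lower bound
`log k! ≥ k log k - k + log k / 2 + log (2π) / 2` beats this because `log (2π) ≥ 3/2`.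
-/

open Real Finset
open scoped Nat

noncomputable def prodFactorialLowerExponent (x : ℝ) : ℝ :=
  x ^ 2 * log x / 2 - 3 * x ^ 2 / 4

lemma three_halves_le_log_two_mul_pi : 3 / 2 ≤ log (2 * π) := by
  rw [le_log_iff_exp_le (by positivity)]
  have hexp_sq : exp (3 / 2) ^ 2 < 6 ^ 2 :=
    calc exp (3 / 2) ^ 2 = exp 1 ^ 3 := by rw [← exp_nat_mul, ← exp_nat_mul]; norm_num
      _ < 3 ^ 3 := by gcongr; exact exp_one_lt_three
      _ < 6 ^ 2 := by norm_num
  have hexp_lt_six : exp (3 / 2) < 6 := lt_of_pow_lt_pow_left₀ 2 (by norm_num) hexp_sq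
  linarith [pi_gt_three]

lemma log_add_one_le_log_add_inv {x : ℝ} (hx : 0 < x) : log (x + 1) ≤ log x + x⁻¹ := by
  have h := log_le_sub_one_of_pos (show 0 < (x + 1) / x by positivity)
  rw [log_div (by positivity) hx.ne', add_div, div_self hx.ne', one_div] at h
  linarith

lemma prodFactorialLowerExponent_add_one_sub_le {x : ℝ} (hx : 1 ≤ x) :
    prodFactorialLowerExponent (x + 1) - prodFactorialLowerExponent x
      ≤ x * log x - x + log x / 2 + log (2 * π) / 2 := by
  have hx0 : 0 < x := by linarith
  have hlog := mul_le_mul_of_nonneg_left (log_add_one_le_log_add_inv hx0)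
    (by positivity : (0 : ℝ) ≤ (x + 1) ^ 2 / 2)
  have hinv : (x + 1) ^ 2 / 2 * x⁻¹ ≤ x / 2 + 3 / 2 := by
    rw [← div_eq_mul_inv, div_div, div_le_iff₀ (by positivity)]
    nlinarith
  unfold prodFactorialLowerExponent
  linarith [three_halves_le_log_two_mul_pi]

lemma prodFactorialLowerExponent_succ_sub_le_log_factorial (k : ℕ) :
    prodFactorialLowerExponent (k + 1) - prodFactorialLowerExponent k ≤ log k ! := by
  rcases Nat.eq_zero_or_pos k with rfl | hk
  · norm_num [prodFactorialLowerExponent]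
  · exact (prodFactorialLowerExponent_add_one_sub_le (by exact_mod_cast hk)).trans
      (Stirling.le_log_factorial_stirling hk.ne')

lemma prodFactorialLowerExponent_le_sum_log_factorial (K : ℕ) :
    prodFactorialLowerExponent K ≤ ∑ k ∈ range K, log k ! := by
  calc prodFactorialLowerExponent K
      = ∑ k ∈ range K, (prodFactorialLowerExponent (k + 1) - prodFactorialLowerExponent k) := by
        simp_rw [← Nat.cast_succ, sum_range_sub (fun k : ℕ ↦ prodFactorialLowerExponent k)]
        simp [prodFactorialLowerExponent]
    _ ≤ ∑ k ∈ range K, log k ! :=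
        sum_le_sum fun k _ ↦ prodFactorialLowerExponent_succ_sub_le_log_factorial k

theorem prod_factorial_lower_bound_general (K : ℕ) :
    Real.exp ((K : ℝ) ^ 2 * Real.log K / 2 - 3 * (K : ℝ) ^ 2 / 4)
      ≤ ∏ k ∈ Finset.range K, (Nat.factorial k : ℝ) := by
  have hpos : 0 < ∏ k ∈ range K, (k ! : ℝ) := prod_pos fun k _ ↦ by positivity
  rw [← le_log_iff_exp_le hpos, log_prod fun k _ ↦ by positivity]
  exact prodFactorialLowerExponent_le_sum_log_factorial K

/-- Lemma 1: For every positive integer `K`, the product of factorials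
`∏_{k=0}^{K-1} k!` is at least `exp(K² log K / 2 - 3K²/4)`. -/
theorem prod_factorial_lower_bound (K : ℕ) (hK : 0 < K) :
    Real.exp ((K : ℝ) ^ 2 * Real.log K / 2 - 3 * (K : ℝ) ^ 2 / 4)
      ≤ ∏ k ∈ Finset.range K, (Nat.factorial k : ℝ) :=
  prod_factorial_lower_bound_general K
end

section
/- Let p_1 = 2, p_2 = 3, … denote the prime numbers in increasing order. For every integer S ≥ 13, the Chebyshev function satisfies θ(p_S) = ∑_{i=1}^{S} log p_i ≥ S·log S. -/
/-!
Induct on `S` from the base case `S = 13`, where `2 · 3 ⋯ 41 ≥ 13 ^ 13` is checked numerically.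
Since `(S + 1) log (S + 1) - S log S ≤ log (S + 1) + 1`, the step needs `p_{S+1} ≥ e (S + 1)`.
That follows from a Chebyshev-type bound `π(x) ≤ 4x/15 + 8/3`: of any 30 consecutive integers
beyond 5, only the `φ 30 = 8` coprime to 30 can be prime.
-/

open Finset Real
open scoped Nat.Prime

namespace Nat

theorem sum_range_count_nth {M : Type*} [AddCommMonoid M] (p : ℕ → Prop) [DecidablePred p]
    (f : ℕ → M) (n : ℕ) : ∑ i ∈ range (count p n), f (nth p i) = ∑ x ∈ range n with p x, f x := by
  induction n with
  | zero => simp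
  | succ n ih =>
    rw [count_succ, range_add_one, filter_insert]
    by_cases hn : p n
    · rw [if_pos hn, if_pos hn, sum_range_succ, ih, nth_count hn,
        sum_insert (by simp), add_comm]
    · simp [hn, ih]

theorem primeCounting'_add_le_of_coprime {a k : ℕ} (h : ∀ p, p.Prime → k ≤ p → a.Coprime p) :
    π' (k + a) ≤ π' k + φ a := by
  calc π' (k + a) ≤ π' k + #{p ∈ Ico k (k + a) | p.Prime} := by
        rw [primeCounting', count_eq_card_filter_range, count_eq_card_filter_range, range_eq_Ico,
          range_eq_Ico, ← Ico_union_Ico_eq_Ico k.zero_le (k.le_add_right a), filter_union]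
        exact card_union_le _ _
    _ ≤ π' k + #{x ∈ Ico k (k + a) | a.Coprime x} := by
      gcongr with p hp
      exact fun hpp => h p hpp (mem_Ico.1 hp).1
    _ = π' k + φ a := by rw [filter_coprime_Ico_eq_totient]

theorem coprime_thirty_of_prime {p : ℕ} (hp : p.Prime) (h6 : 6 ≤ p) : Coprime 30 p := by
  rw [show 30 = 2 * 3 * 5 by rfl]
  refine Coprime.mul_left (Coprime.mul_left ?_ ?_) ?_ <;>
    rw [coprime_primes (by norm_num) hp] <;> omega

theorem fifteen_mul_primeCounting'_le (n : ℕ) : 15 * π' n ≤ 4 * n + 40 := by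
  induction n using Nat.strong_induction_on with
  | _ n ih =>
    rcases lt_or_ge n 36 with h | h
    · interval_cases n <;> decide
    · obtain ⟨m, rfl⟩ : ∃ m, n = m + 30 := ⟨n - 30, by omega⟩
      have hblock : π' (m + 30) ≤ π' m + 8 := by
        simpa only [show φ 30 = 8 by decide] using primeCounting'_add_le_of_coprime
          fun p hp hmp => coprime_thirty_of_prime hp (by omega)
      have := ih m (by omega)
      omega

theorem fifteen_mul_le_nth_prime (n : ℕ) : 15 * n ≤ 4 * nth Nat.Prime n + 40 := by
  simpa only [primeCounting'_nth_eq] using fifteen_mul_primeCounting'_le (nth Nat.Prime n)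

end Nat

theorem Real.mul_log_add_one_sub_log_le_one {x : ℝ} (hx : 0 < x) :
    x * (log (x + 1) - log x) ≤ 1 := by
  have h : log ((x + 1) / x) ≤ (x + 1) / x - 1 := log_le_sub_one_of_pos (by positivity)
  rw [log_div (by positivity) hx.ne'] at h
  calc x * (log (x + 1) - log x) ≤ x * ((x + 1) / x - 1) := by gcongr
    _ = 1 := by field_simp; ring

-- `13` is the least `n` with `(15 n - 40) / 4 ≥ e (n + 1)`.
theorem exp_one_mul_le_nth_prime {n : ℕ} (hn : 13 ≤ n) :
    exp 1 * (n + 1) ≤ Nat.nth Nat.Prime n := by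
  have hp : (15 : ℝ) * n ≤ 4 * Nat.nth Nat.Prime n + 40 := by
    exact_mod_cast Nat.fifteen_mul_le_nth_prime n
  have hn' : (13 : ℝ) ≤ n := by exact_mod_cast hn
  nlinarith [exp_one_lt_d9]

theorem log_add_one_add_one_le_log_nth_prime {n : ℕ} (hn : 13 ≤ n) :
    log (n + 1) + 1 ≤ log (Nat.nth Nat.Prime n) := by
  calc log (n + 1) + 1 = log (exp 1 * (n + 1)) := by
        rw [log_mul (exp_ne_zero 1) (by positivity), log_exp, add_comm]
    _ ≤ log (Nat.nth Nat.Prime n) := log_le_log (by positivity) (exp_one_mul_le_nth_prime hn)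

theorem thirteen_mul_log_thirteen_le_sum_log_nth_prime :
    13 * log 13 ≤ ∑ i ∈ range 13, log (Nat.nth Nat.Prime i) := by
  have hprod : ∑ i ∈ range 13, log (Nat.nth Nat.Prime i) = log 304250263527210 := by
    rw [show 13 = Nat.count Nat.Prime 42 by decide,
      Nat.sum_range_count_nth Nat.Prime (fun p => log p),
      ← log_prod (fun p hp => by exact_mod_cast (mem_filter.1 hp).2.ne_zero), ← Nat.cast_prod,
      show ∏ p ∈ range 42 with p.Prime, p = 304250263527210 by decide]
    norm_num
  rw [hprod, show (13 : ℝ) * log 13 = log (13 ^ 13) by rw [log_pow]; norm_num]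
  exact log_le_log (by positivity) (by norm_num)

/-- Lemma 2(i): For `S ≥ 13`, `θ(p_S) = ∑_{i=1}^{S} log p_i ≥ S log S`,
where `p_1 = 2, p_2 = 3, …` are the primes in increasing order
(here `Nat.nth Nat.Prime i` is the `(i+1)`-st prime). -/
theorem sum_log_primes_lower_bound (S : ℕ) (hS : 13 ≤ S) :
    (S : ℝ) * Real.log S ≤ ∑ i ∈ Finset.range S, Real.log (Nat.nth Nat.Prime i) := by
  induction S, hS using Nat.le_induction with
  | base => exact_mod_cast thirteen_mul_log_thirteen_le_sum_log_nth_prime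
  | succ S hS ih =>
    have hstep := mul_log_add_one_sub_log_le_one (x := S) (by positivity)
    have hlog := log_add_one_add_one_le_log_nth_prime hS
    rw [sum_range_succ]
    push_cast
    linarith
end

section
/- Suppose d > 10000 is a real number, 1.2 ≤ k₁ ≤ 1.6 and 1.2 ≤ s₁ are real numbers. Then (k₁² + 2s₁)·(log log log d)/(log log d) + ((0.89 + log k₁)·k₁² + 2.39·s₁)/(log log d) − (k₁² + 2s₁) > −2·k₁·s₁·(log s₁)·(log d)/(log log d)². -/
private lemma log_onepointtwo : (0.18:ℝ) < Real.log 1.2 := by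
  have h9 : Real.exp 9 < 1.2 ^ 50 := by
    have h1 : Real.exp 9 = Real.exp 1 ^ 9 := by
      rw [show (9:ℝ) = ((9:ℕ):ℝ) * 1 by norm_num, Real.exp_nat_mul]
    calc Real.exp 9 = Real.exp 1 ^ 9 := h1
      _ < 2.7182818286 ^ 9 :=
          pow_lt_pow_left₀ Real.exp_one_lt_d9 (Real.exp_pos 1).le (by norm_num)
      _ < 1.2 ^ 50 := by norm_num
  have h := Real.log_lt_log (Real.exp_pos 9) h9
  rw [Real.log_exp, Real.log_pow] at h
  push_cast at h
  linarith

private lemma core1 (L X WX : ℝ) (hX : 2.1916 ≤ X)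
    (hL : 8*(1+(X-2.0794416)+(X-2.0794416)^2/2+(X-2.0794416)^3/6+(X-2.0794416)^4/24) ≤ L)
    (hW1 : 1.6931*X - 2 ≤ WX) :
    0 < 0.432*L + 2.39*X + 2*WX - 2*X^2 := by
  nlinarith [sq_nonneg (X-2.1916), sq_nonneg ((X-2.1916)^2),
    mul_nonneg (mul_nonneg (sub_nonneg.2 hX) (sub_nonneg.2 hX)) (sub_nonneg.2 hX)]

private lemma core2 (L X WX : ℝ) (hX : 2.1916 ≤ X)
    (hL : 8*(1+(X-2.0794416)+(X-2.0794416)^2/2+(X-2.0794416)^3/6+(X-2.0794416)^4/24) ≤ L)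
    (hW1 : 1.6931*X - 2 ≤ WX) (hW2 : 2.3862*X - 4 ≤ WX) :
    0 < 0.5184*L + 4.4088*X + 3.84*WX - 3.84*X^2 := by
  nlinarith [sq_nonneg (X-2.1916), sq_nonneg ((X-2.1916)^2), sq_nonneg (X-2.885),
    mul_nonneg (mul_nonneg (sub_nonneg.2 hX) (sub_nonneg.2 hX)) (sub_nonneg.2 hX)]

private lemma core3 (L X WX : ℝ) (hX : 2.1916 ≤ X)
    (hL : 8*(1+(X-2.0794416)+(X-2.0794416)^2/2+(X-2.0794416)^3/6+(X-2.0794416)^4/24) ≤ L)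
    (hW1 : 1.6931*X - 2 ≤ WX) (hW2 : 2.3862*X - 4 ≤ WX) :
    0 < 0.6912*L + 5.6072*X + 4.96*WX - 4.96*X^2 := by
  nlinarith [sq_nonneg (X-2.1916), sq_nonneg ((X-2.1916)^2), sq_nonneg (X-2.885),
    mul_nonneg (mul_nonneg (sub_nonneg.2 hX) (sub_nonneg.2 hX)) (sub_nonneg.2 hX)]

set_option maxHeartbeats 2000000 in
/-- Lemma 3: a technical inequality. For real `d > 10000`,
`1.2 ≤ k₁ ≤ 1.6` and `1.2 ≤ s₁`, one has
`(k₁² + 2s₁)·(logloglog d)/(loglog d) + ((0.89 + log k₁)k₁² + 2.39 s₁)/(loglog d)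
  - (k₁² + 2s₁) > - 2 k₁ s₁ (log s₁)(log d)/(loglog d)²`. -/
theorem technical_inequality (d k₁ s₁ : ℝ) (hd : 10000 < d)
    (hk₁ : 1.2 ≤ k₁) (hk₁' : k₁ ≤ 1.6) (hs₁ : 1.2 ≤ s₁) :
    -(2 * k₁ * s₁ * Real.log s₁ * Real.log d / (Real.log (Real.log d)) ^ 2)
      < (k₁ ^ 2 + 2 * s₁) * Real.log (Real.log (Real.log d)) / Real.log (Real.log d)
        + ((0.89 + Real.log k₁) * k₁ ^ 2 + 2.39 * s₁) / Real.log (Real.log d)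
        - (k₁ ^ 2 + 2 * s₁) := by
  have l2a := Real.log_two_gt_d9
  have l2b := Real.log_two_lt_d9
  set u := Real.log s₁ with hu_def
  set v := Real.log k₁ with hv_def
  set L := Real.log d with hL_def
  set X := Real.log L with hX_def
  set W := Real.log X with hW_def
  -- basic bounds
  have hL13 : 13 * Real.log 2 < L := by
    have h := Real.log_lt_log (by norm_num : (0:ℝ) < 8192) (by linarith : (8192:ℝ) < d)
    rw [show (8192:ℝ) = 2 ^ (13:ℕ) by norm_num, Real.log_pow] at h
    push_cast at h
    linarith
  have hL9 : (9.0109:ℝ) < L := by linarith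
  have hLpos : (0:ℝ) < L := by linarith
  have hX8 : 3 * Real.log 2 < X := by
    have h := Real.log_lt_log (by norm_num : (0:ℝ) < 8) (by linarith : (8:ℝ) < L)
    rw [show (8:ℝ) = 2 ^ (3:ℕ) by norm_num, Real.log_pow] at h
    push_cast at h
    linarith
  have hX2 : (2.1916:ℝ) < X := by
    have h := Real.one_sub_inv_le_log_of_pos (show (0:ℝ) < L/8 by linarith)
    rw [Real.log_div (ne_of_gt hLpos) (by norm_num : (8:ℝ) ≠ 0), inv_div] at h
    have hlog8 : Real.log 8 = 3 * Real.log 2 := by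
      rw [show (8:ℝ) = 2 ^ (3:ℕ) by norm_num, Real.log_pow]; push_cast; ring
    rw [hlog8] at h
    have h8L : 8 / L ≤ 0.88782 := by
      rw [div_le_iff₀ hLpos]; nlinarith
    linarith
  have hXpos : (0:ℝ) < X := by linarith
  -- Taylor lower bound for L = exp X
  have hLP : 8*(1+(X-2.0794416)+(X-2.0794416)^2/2+(X-2.0794416)^3/6+(X-2.0794416)^4/24) ≤ L := by
    set t := X - 2.0794416 with ht_def
    have ht0 : (0:ℝ) ≤ t := by simp only [ht_def]; linarith
    have hsum := Real.sum_le_exp_of_nonneg ht0 5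
    simp [Finset.sum_range_succ, Nat.factorial] at hsum
    have hmono : Real.exp t ≤ Real.exp (X - 3 * Real.log 2) := by
      apply Real.exp_le_exp.2
      simp only [ht_def]
      linarith
    have hexpeq : Real.exp (X - 3 * Real.log 2) = L / 8 := by
      rw [Real.exp_sub, hX_def, Real.exp_log hLpos,
        show (3:ℝ) * Real.log 2 = Real.log 8 by
          rw [show (8:ℝ) = 2 ^ (3:ℕ) by norm_num, Real.log_pow]; push_cast; ring,
        Real.exp_log (by norm_num : (0:ℝ) < 8)]
    rw [hexpeq] at hmono
    nlinarith [le_trans hsum hmono]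
  -- lower bounds for W*X
  have hW1 : 1.6931*X - 2 ≤ W*X := by
    have h := Real.one_sub_inv_le_log_of_pos (show (0:ℝ) < X/2 by linarith)
    rw [Real.log_div (ne_of_gt hXpos) (by norm_num : (2:ℝ) ≠ 0), inv_div] at h
    have h3 : (1 - 2/X) * X = X - 2 := by field_simp
    have h4 := mul_le_mul_of_nonneg_right h hXpos.le
    rw [h3] at h4
    nlinarith
  have hW2 : 2.3862*X - 4 ≤ W*X := by
    have h := Real.one_sub_inv_le_log_of_pos (show (0:ℝ) < X/4 by linarith)
    rw [Real.log_div (ne_of_gt hXpos) (by norm_num : (4:ℝ) ≠ 0), inv_div] at h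
    have hlog4 : Real.log 4 = 2 * Real.log 2 := by
      rw [show (4:ℝ) = 2 ^ (2:ℕ) by norm_num, Real.log_pow]; push_cast; ring
    rw [hlog4] at h
    have h3 : (1 - 4/X) * X = X - 4 := by field_simp
    have h4 := mul_le_mul_of_nonneg_right h hXpos.le
    rw [h3] at h4
    nlinarith
  -- bounds on u and v
  have hu : (0.18:ℝ) < u := lt_of_lt_of_le log_onepointtwo
    (Real.log_le_log (by norm_num) hs₁)
  have hv : (0.18:ℝ) < v := lt_of_lt_of_le log_onepointtwo
    (Real.log_le_log (by norm_num) hk₁)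
  -- main estimate
  have hc1 := core1 L X (W*X) hX2.le hLP hW1
  have hF : 0 < 2*k₁*s₁*u*L + ((0.89+v)*k₁^2+2.39*s₁)*X + (k₁^2+2*s₁)*(W*X)
      - (k₁^2+2*s₁)*X^2 := by
    have hspos : (0:ℝ) < s₁ := by linarith
    set c2 := (0.89 + v + W - X)*X with hc2_def
    rcases le_or_gt 0 c2 with hc2 | hc2
    · -- c2 ≥ 0
      nlinarith [mul_nonneg (sq_nonneg k₁) hc2,
        mul_nonneg (mul_nonneg (by nlinarith : (0:ℝ) ≤ k₁*u - 0.216) hspos.le) hLpos.le,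
        mul_nonneg (by linarith : (0:ℝ) ≤ s₁ - 1.2) hc1.le]
    · -- c2 < 0 : use k² ≤ 2.8k - 1.92
      have hkk : (0:ℝ) ≤ (k₁ - 1.2)*(1.6 - k₁) := by nlinarith
      have hk2c2 : (2.8*k₁ - 1.92)*c2 ≤ k₁^2*c2 := by nlinarith [mul_nonneg hkk (neg_nonneg.2 hc2.le)]
      have hvc2 : (1.07 + W - X)*X ≤ c2 := by
        rw [hc2_def]; nlinarith
      rcases le_or_gt 0 (2*s₁*u*L + 2.8*c2) with h5 | h5
      · -- k coefficient nonneg: take k = 1.2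
        have hI := core2 L X (W*X) hX2.le hLP hW1 hW2
        nlinarith [mul_nonneg (by linarith : (0:ℝ) ≤ k₁ - 1.2) h5,
          mul_nonneg (mul_nonneg (by linarith : (0:ℝ) ≤ u - 0.18) hspos.le) hLpos.le,
          mul_nonneg (by linarith : (0:ℝ) ≤ s₁ - 1.2) hc1.le, hk2c2, hvc2, hXpos]
      · -- k coefficient negative: take k = 1.6
        have hII := core3 L X (W*X) hX2.le hLP hW1 hW2
        have hbr : (0:ℝ) < 0.576*L + 2.39*X + 2*(W*X) - 2*X^2 := by nlinarith
        nlinarith [mul_nonpos_of_nonneg_of_nonpos (by linarith : (0:ℝ) ≤ 1.6 - k₁) h5.le,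
          mul_nonneg (mul_nonneg (by linarith : (0:ℝ) ≤ u - 0.18) hspos.le) hLpos.le,
          mul_nonneg (by linarith : (0:ℝ) ≤ s₁ - 1.2) hbr.le, hk2c2, hvc2, hXpos]
  -- convert to the goal
  have hX2pos : (0:ℝ) < X^2 := by positivity
  have hident : (k₁^2+2*s₁)*W/X + ((0.89+v)*k₁^2+2.39*s₁)/X - (k₁^2+2*s₁)
      + 2*k₁*s₁*u*L/X^2
      = (2*k₁*s₁*u*L + ((0.89+v)*k₁^2+2.39*s₁)*X + (k₁^2+2*s₁)*(W*X)
        - (k₁^2+2*s₁)*X^2)/X^2 := by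
    field_simp
    ring
  have hfinal := div_pos hF hX2pos
  rw [← hident] at hfinal
  linarith
end

section
/- Let α be a non-zero algebraic integer of degree d with conjugates α = α_1, …, α_d. If there exist indices i, j and positive integers r and s such that α_i^r = α_j^s, then either r = s or α is a root of unity. -/
open Polynomial

/-!
Let `σ` be an automorphism of the splitting field of the minimal polynomial with `σ αᵢ = αⱼ`.
Applying `σ` repeatedly to `αᵢ ^ r = (σ αᵢ) ^ s` gives `αᵢ ^ r ^ m = (σ ^ m αᵢ) ^ s ^ m`, so for
`m` the order of `σ` we get `αᵢ ^ r ^ m = αᵢ ^ s ^ m` with `r ^ m ≠ s ^ m`. Hence `αᵢ`, and with it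
its conjugate `α`, is a root of unity.
-/

theorem isOfFinOrder_of_pow_eq_pow_of_ne {G₀ : Type*} [GroupWithZero G₀] {x : G₀} (hx : x ≠ 0)
    {a b : ℕ} (hab : a ≠ b) (h : x ^ a = x ^ b) : IsOfFinOrder x := by
  rw [← Units.val_mk0 hx, Units.isOfFinOrder_val, ← not_not (a := IsOfFinOrder _),
    ← injective_pow_iff_not_isOfFinOrder]
  exact fun hinj => hab (hinj (Units.ext (by simpa using h)))

section MulDistribMulAction

variable {G M : Type*} [Monoid G] [Monoid M] [MulDistribMulAction G M] {g : G} {x : M} {r s : ℕ}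

theorem pow_pow_eq_smul_pow_pow (h : x ^ r = (g • x) ^ s) (m : ℕ) :
    x ^ r ^ m = (g ^ m • x) ^ s ^ m := by
  induction m with
  | zero => simp
  | succ m ih =>
    calc x ^ r ^ (m + 1) = ((g ^ m • x) ^ r) ^ s ^ m := by
          rw [pow_succ, pow_mul, ih, ← pow_mul, ← pow_mul, mul_comm]
      _ = (g ^ (m + 1) • x) ^ s ^ (m + 1) := by
          rw [← smul_pow', h, smul_pow', ← mul_smul, ← pow_succ, ← pow_mul, ← pow_succ']

theorem pow_pow_orderOf_eq (h : x ^ r = (g • x) ^ s) : x ^ r ^ orderOf g = x ^ s ^ orderOf g := by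
  simpa [pow_orderOf_eq_one] using pow_pow_eq_smul_pow_pow h (orderOf g)

end MulDistribMulAction

theorem minpoly_eq_of_map_minpoly_eq_prod {K A ι : Type*} [Field K] [CommRing A] [IsDomain A]
    [Algebra K A] [Fintype ι] {x : A} (hx : IsIntegral K x) {xs : ι → A}
    (h : (minpoly K x).map (algebraMap K A) = ∏ k, (X - C (xs k))) (k : ι) :
    minpoly K (xs k) = minpoly K x := by
  refine (minpoly.eq_of_irreducible_of_monic (minpoly.irreducible hx) ?_ (minpoly.monic hx)).symm
  rw [aeval_def, eval₂_eq_eval_map, h, eval_prod]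
  exact Finset.prod_eq_zero (Finset.mem_univ k) (by simp)

section minpoly

variable {K A B : Type*} [Field K] [Ring A] [Ring B] [Algebra K A] [Algebra K B]

theorem ne_zero_of_minpoly_eq [Nontrivial A] {x : A} {y : B} (hxy : minpoly K x = minpoly K y)
    (hy : y ≠ 0) : x ≠ 0 := by
  rintro rfl
  exact hy (by simpa [← hxy] using minpoly.aeval K y)

theorem IsOfFinOrder.of_minpoly_eq {x : A} {y : B} (hxy : minpoly K x = minpoly K y)
    (hy : IsOfFinOrder y) : IsOfFinOrder x := by
  obtain ⟨n, hn, hyn⟩ := isOfFinOrder_iff_pow_eq_one.1 hy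
  refine isOfFinOrder_iff_pow_eq_one.2 ⟨n, hn, ?_⟩
  have hdvd : minpoly K x ∣ X ^ n - 1 := hxy ▸ minpoly.dvd K y (by simp [hyn])
  simpa [sub_eq_zero] using aeval_eq_zero_of_dvd_aeval_eq_zero hdvd (minpoly.aeval K x)

end minpoly

theorem isOfFinOrder_of_pow_eq_pow_of_minpoly_eq {K L : Type*} [Field K] [Field L] [Algebra K L]
    [FiniteDimensional K L] [Normal K L] {x y : L} (hx : x ≠ 0) (hxy : minpoly K x = minpoly K y)
    {r s : ℕ} (hrs : r ≠ s) (h : x ^ r = y ^ s) : IsOfFinOrder x := by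
  obtain ⟨σ, rfl⟩ := minpoly.exists_algEquiv_of_root' (Algebra.IsAlgebraic.isAlgebraic x)
    (hxy ▸ minpoly.aeval K y)
  refine isOfFinOrder_of_pow_eq_pow_of_ne hx ?_ (pow_pow_orderOf_eq (g := σ) h)
  exact fun e => hrs (Nat.pow_left_injective (orderOf_pos σ).ne' e)

theorem conjugate_power_eq_general
    (α : ℂ) (hα : α ≠ 0) (hint : IsIntegral ℤ α)
    (d : ℕ)
    (αs : Fin d → ℂ)
    (hconj : (minpoly ℚ α).map (algebraMap ℚ ℂ)
      = ∏ i, (Polynomial.X - Polynomial.C (αs i)))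
    (i j : Fin d) (r s : ℕ)
    (h : αs i ^ r = αs j ^ s) :
    r = s ∨ ∃ n : ℕ, 0 < n ∧ α ^ n = 1 := by
  refine or_iff_not_imp_left.2 fun hrs => ?_
  have hαQ : IsIntegral ℚ α := hint.tower_top
  have hminpoly := minpoly_eq_of_map_minpoly_eq_prod hαQ hconj
  let L := IntermediateField.adjoin ℚ ((minpoly ℚ α).rootSet ℂ)
  have : IsSplittingField ℚ L (minpoly ℚ α) :=
    IntermediateField.adjoin_rootSet_isSplittingField (IsAlgClosed.splits _)
  have : FiniteDimensional ℚ L := IsSplittingField.finiteDimensional L (minpoly ℚ α)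
  have : Normal ℚ L := Normal.of_isSplittingField (minpoly ℚ α)
  have hmem (k : Fin d) : αs k ∈ L := IntermediateField.subset_adjoin ℚ _ <|
    mem_rootSet.2 ⟨minpoly.ne_zero hαQ, hminpoly k ▸ minpoly.aeval ℚ (αs k)⟩
  have hminpolyL (k : Fin d) : minpoly ℚ (⟨αs k, hmem k⟩ : L) = minpoly ℚ α :=
    (IntermediateField.minpoly_eq _).trans (hminpoly k)
  have hx : (⟨αs i, hmem i⟩ : L) ≠ 0 := ne_zero_of_minpoly_eq (hminpolyL i) hα
  have hx_fin := isOfFinOrder_of_pow_eq_pow_of_minpoly_eq hx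
    ((hminpolyL i).trans (hminpolyL j).symm) hrs (Subtype.ext h)
  exact isOfFinOrder_iff_pow_eq_one.1 (hx_fin.of_minpoly_eq (hminpolyL i).symm)

/-- **Lemma 5 (Dobrowolski).** Let `α` be a non-zero algebraic integer of degree `d`
with conjugates `α = α₁, …, α_d` (the roots in `ℂ` of its minimal polynomial over `ℚ`).
If there are indices `i, j` and positive integers `r, s` with `αᵢ^r = αⱼ^s`, then
either `r = s` or `α` is a root of unity. -/
theorem conjugate_power_eq
    (α : ℂ) (hα : α ≠ 0) (hint : IsIntegral ℤ α)
    (d : ℕ) (hd : (minpoly ℚ α).natDegree = d)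
    (αs : Fin d → ℂ)
    (hconj : (minpoly ℚ α).map (algebraMap ℚ ℂ)
      = ∏ i, (Polynomial.X - Polynomial.C (αs i)))
    (i j : Fin d) (r s : ℕ) (hr : 0 < r) (hs : 0 < s)
    (h : αs i ^ r = αs j ^ s) :
    r = s ∨ ∃ n : ℕ, 0 < n ∧ α ^ n = 1 :=
  conjugate_power_eq_general α hα hint d αs hconj i j r s h
end

section
/- Let α be a non-zero algebraic number of degree d with conjugates α_1, …, α_d and Mahler measure M(α). Let k and s be positive integers, let p_1 < … < p_s be the first s primes, set p_0 = 1 and n = d(k+s). Let β be the d(s+1)-tuple (α_1^{p_0}, …, α_d^{p_0}, α_1^{p_1}, …, α_d^{p_1}, …, α_1^{p_s}, …, α_d^{p_s}) and let r be the d(s+1)-tuple whose first d components equal k and whose remaining sd components equal 1. Then |V(β, r)|² ≤ (n^{k²+s} / ∏_{i=0}^{k−1} (2i+1)·(i!)²)^d · M(α)^{2n(k + p_1 + ⋯ + p_s)}. -/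
/-!
By Hadamard's inequality `|det M|²` is at most the product of the squared lengths of the
columns. The column `v_i(β)` has entries `C(ℓ, i) β ^ (ℓ - i)` with `C(ℓ, i) ≤ ℓ ^ i / i !`, so
comparing `∑_{ℓ < n} ℓ ^ (2i)` with `∫₀ⁿ x ^ (2i) dx` bounds its squared length by
`n ^ (2i+1) / ((2i+1) (i !)²) · μ ^ (2n)` for any `μ ≥ max(1, |β|)`. Take `μ = max(1, |αⱼ|) ^ p`
for the node `αⱼ ^ p`, multiply over the `k` columns at each `αⱼ` and the single columns at each
`αⱼ ^ pₜ`, and use `1 ≤ a_d`.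
-/

open Finset Nat

theorem sum_range_pow_le (n m : ℕ) :
    ∑ r ∈ range n, (r : ℝ) ^ m ≤ (n : ℝ) ^ (m + 1) / (m + 1) := by
  have hmono : MonotoneOn (fun x : ℝ => x ^ m) (Set.Icc 0 (0 + n)) := fun x hx _ _ hxy =>
    pow_le_pow_left₀ hx.1 hxy m
  simpa [integral_pow] using hmono.sum_le_integral

noncomputable def chooseSqSumBound (n i : ℕ) : ℝ :=
  (n : ℝ) ^ (2 * i + 1) / ((2 * i + 1) * (i ! : ℝ) ^ 2)

theorem sum_range_choose_sq_le (n i : ℕ) :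
    ∑ r ∈ range n, (r.choose i : ℝ) ^ 2 ≤ chooseSqSumBound n i := by
  calc ∑ r ∈ range n, (r.choose i : ℝ) ^ 2 ≤ ∑ r ∈ range n, ((r : ℝ) ^ i / i !) ^ 2 := by
        gcongr with r; exact Nat.choose_le_pow_div i r
    _ = (∑ r ∈ range n, (r : ℝ) ^ (2 * i)) / (i ! : ℝ) ^ 2 := by
        simp only [div_pow, ← pow_mul, mul_comm i 2, sum_div]
    _ ≤ (n : ℝ) ^ (2 * i + 1) / (2 * i + 1) / (i ! : ℝ) ^ 2 := by
        gcongr; exact_mod_cast sum_range_pow_le n (2 * i)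
    _ = _ := by rw [div_div, chooseSqSumBound]

theorem sum_range_two_mul_add_one (k : ℕ) : ∑ i ∈ range k, (2 * i + 1) = k ^ 2 := by
  induction k with
  | zero => rfl
  | succ k ih => rw [sum_range_succ, ih]; ring

theorem prod_range_chooseSqSumBound (n k : ℕ) :
    ∏ i ∈ range k, chooseSqSumBound n i
      = (n : ℝ) ^ (k ^ 2) / ∏ i ∈ range k, ((2 * (i : ℝ) + 1) * (i ! : ℝ) ^ 2) := by
  rw [prod_congr rfl fun i _ => chooseSqSumBound.eq_def n i, prod_div_distrib,
    prod_pow_eq_pow_sum, sum_range_two_mul_add_one]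

theorem prod_prod_range_ite_mul_pow {M : Type*} [CommMonoid M] (d k s N : ℕ) (S : ℕ → M)
    (m : Fin d → M) (w : Fin (s + 1) → ℕ) :
    ∏ c : Fin (s + 1) × Fin d, ∏ i ∈ range (if c.1 = 0 then k else 1), S i * (m c.2 ^ w c.1) ^ N
      = ((∏ i ∈ range k, S i) * S 0 ^ s) ^ d
          * (∏ j, m j) ^ (N * (k * w 0 + ∑ t : Fin s, w t.succ)) := by
  calc _ = ∏ j, ((∏ i ∈ range k, S i) * S 0 ^ s)
          * m j ^ (N * (k * w 0 + ∑ t : Fin s, w t.succ)) := by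
        rw [Fintype.prod_prod_type, prod_comm]
        refine prod_congr rfl fun j _ => ?_
        simp only [Fin.prod_univ_succ, if_pos, Fin.succ_ne_zero, if_false, prod_range_one,
          prod_mul_distrib, prod_const, card_range, Finset.card_univ, Fintype.card_fin, ← pow_mul,
          prod_pow_eq_pow_sum]
        rw [Fin.sum_univ_succ, mul_add, mul_sum]
        simp only [if_pos, Fin.succ_ne_zero, if_false, mul_one]
        ring_nf
    _ = _ := by rw [prod_mul_distrib, prod_const, Finset.card_univ, Fintype.card_fin, prod_pow]

variable {𝕜 : Type*} [RCLike 𝕜]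

theorem sum_norm_sq_choose_mul_pow_le {β : 𝕜} {μ : ℝ} (hμ : 1 ≤ μ) (hβ : ‖β‖ ≤ μ) (n i : ℕ) :
    ∑ ℓ : Fin n, ‖(ℓ.val.choose i : 𝕜) * β ^ (ℓ.val - i)‖ ^ 2
      ≤ chooseSqSumBound n i * μ ^ (2 * n) := by
  have hpow : ∀ ℓ : Fin n, ‖β‖ ^ (ℓ.val - i) ≤ μ ^ n := fun ℓ =>
    (pow_le_pow_left₀ (norm_nonneg β) hβ _).trans (pow_le_pow_right₀ hμ (by omega))
  calc ∑ ℓ : Fin n, ‖(ℓ.val.choose i : 𝕜) * β ^ (ℓ.val - i)‖ ^ 2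
      ≤ ∑ ℓ : Fin n, (ℓ.val.choose i : ℝ) ^ 2 * μ ^ (2 * n) := by
        gcongr with ℓ
        rw [norm_mul, norm_pow, RCLike.norm_natCast, mul_pow, pow_mul']
        gcongr
        exact hpow ℓ
    _ ≤ _ := by
        rw [← sum_mul, Fin.sum_univ_eq_sum_range (fun ℓ => (ℓ.choose i : ℝ) ^ 2)]
        gcongr
        exact sum_range_choose_sq_le n i

theorem Matrix.norm_det_le_prod_norm_col {n : ℕ} (A : Matrix (Fin n) (Fin n) 𝕜) :
    ‖A.det‖ ≤ ∏ j, ‖(WithLp.toLp 2 fun i => A i j : EuclideanSpace 𝕜 (Fin n))‖ := by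
  set v : Fin n → EuclideanSpace 𝕜 (Fin n) := fun j => WithLp.toLp 2 fun i => A i j
  let e := EuclideanSpace.basisFun (Fin n) 𝕜
  let b := InnerProductSpace.gramSchmidtOrthonormalBasis (𝕜 := 𝕜) (by simp) v
  -- The columns are triangular in the Gram–Schmidt basis `b`, and the change of orthonormal
  -- basis from `e` to `b` is unitary.
  have hA : A.det = e.toBasis.det b * b.toBasis.det v := by
    have hmul := e.toBasis.toMatrix_mul_toMatrix b.toBasis v
    rw [OrthonormalBasis.coe_toBasis] at hmul
    rw [Module.Basis.det_apply, Module.Basis.det_apply, ← Matrix.det_mul, hmul]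
    rfl
  rw [hA, norm_mul, OrthonormalBasis.det_to_matrix_orthonormalBasis, one_mul,
    InnerProductSpace.gramSchmidtOrthonormalBasis_det, norm_prod]
  gcongr with j
  simpa [b.orthonormal.1 j] using norm_inner_le_norm (𝕜 := 𝕜) (b j) (v j)

theorem Matrix.norm_det_sq_le_prod_sum_norm_sq {n : ℕ} (A : Matrix (Fin n) (Fin n) 𝕜) :
    ‖A.det‖ ^ 2 ≤ ∏ j, ∑ i, ‖A i j‖ ^ 2 := by
  calc ‖A.det‖ ^ 2
      ≤ (∏ j, ‖(WithLp.toLp 2 fun i => A i j : EuclideanSpace 𝕜 (Fin n))‖) ^ 2 := by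
        gcongr; exact A.norm_det_le_prod_norm_col
    _ = ∏ j, ∑ i, ‖A i j‖ ^ 2 := by
        rw [← prod_pow]
        exact prod_congr rfl fun j _ => by
          rw [EuclideanSpace.norm_eq, Real.sq_sqrt (sum_nonneg fun i _ => sq_nonneg _)]

variable {ι : Type*} {R : ι → ℕ} {n : ℕ}

/-- The truncated subtraction `ℓ - i` is harmless: the binomial coefficient vanishes when
`ℓ < i`. -/
def Matrix.confluentVandermonde (β : ι → 𝕜) (e : Fin n ≃ Σ c, Fin (R c)) :
    Matrix (Fin n) (Fin n) 𝕜 :=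
  Matrix.of fun ℓ c => ((ℓ : ℕ).choose (e c).2 : 𝕜) * β (e c).1 ^ ((ℓ : ℕ) - (e c).2)

theorem Matrix.norm_det_confluentVandermonde_sq_le [Fintype ι] {β : ι → 𝕜} {μ : ι → ℝ}
    (hμ : ∀ c, 1 ≤ μ c) (hβ : ∀ c, ‖β c‖ ≤ μ c) (e : Fin n ≃ Σ c, Fin (R c)) :
    ‖(confluentVandermonde β e).det‖ ^ 2
      ≤ ∏ c, ∏ i ∈ range (R c), chooseSqSumBound n i * μ c ^ (2 * n) := by
  set F : (Σ c, Fin (R c)) → ℝ := fun x => chooseSqSumBound n x.2 * μ x.1 ^ (2 * n)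
  calc ‖(confluentVandermonde β e).det‖ ^ 2
      ≤ ∏ j, ∑ ℓ, ‖confluentVandermonde β e ℓ j‖ ^ 2 := norm_det_sq_le_prod_sum_norm_sq _
    _ ≤ ∏ j, F (e j) := prod_le_prod (fun j _ => sum_nonneg fun ℓ _ => sq_nonneg _)
        fun j _ => sum_norm_sq_choose_mul_pow_le (hμ _) (hβ _) n (e j).2
    _ = ∏ c, ∏ i : Fin (R c), F ⟨c, i⟩ := by rw [e.prod_comp F, ← univ_sigma_univ, prod_sigma]
    _ = _ := prod_congr rfl fun c _ =>
        Fin.prod_univ_eq_prod_range (fun i => chooseSqSumBound n i * μ c ^ (2 * n)) (R c)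

theorem confluent_vandermonde_upper_bound_general
    (d : ℕ)
    (f : Polynomial ℤ)
    (hlead : 0 < f.leadingCoeff)
    (αs : Fin d → ℂ)
    (k s : ℕ)
    (P : Fin (s + 1) → ℕ)
    (hP0 : P 0 = 1)
    (hP : ∀ ℓ : Fin (s + 1), (ℓ : ℕ) ≠ 0 → P ℓ = Nat.nth Nat.Prime ((ℓ : ℕ) - 1))
    (B : Fin (s + 1) × Fin d → ℂ) (hB : ∀ ℓ i, B (ℓ, i) = αs i ^ P ℓ)
    (R : Fin (s + 1) × Fin d → ℕ) (hR : ∀ ℓ i, R (ℓ, i) = if ℓ = 0 then k else 1)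
    (n : ℕ)
    (e : Fin n ≃ (Σ c : Fin (s + 1) × Fin d, Fin (R c)))
    (M : Matrix (Fin n) (Fin n) ℂ)
    (hM : ∀ ℓ c : Fin n, M ℓ c =
      (Nat.choose (ℓ : ℕ) ((e c).2 : ℕ) : ℂ) * B (e c).1 ^ ((ℓ : ℕ) - ((e c).2 : ℕ))) :
    ‖M.det‖ ^ 2
      ≤ ((n : ℝ) ^ (k ^ 2 + s)
            / ∏ i ∈ Finset.range k, ((2 * (i : ℝ) + 1) * (Nat.factorial i : ℝ) ^ 2)) ^ d
          * ((f.leadingCoeff : ℝ) * ∏ i, max 1 ‖αs i‖)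
              ^ (2 * n * (k + ∑ i ∈ Finset.range s, Nat.nth Nat.Prime i)) := by
  obtain rfl : R = fun c => if c.1 = 0 then k else 1 := funext fun c => hR c.1 c.2
  have hMV : M = Matrix.confluentVandermonde B e := Matrix.ext hM
  have hPsum : ∑ t : Fin s, P t.succ = ∑ i ∈ range s, Nat.nth Nat.Prime i := by
    rw [← Fin.sum_univ_eq_sum_range]
    exact sum_congr rfl fun t _ => by simp [hP t.succ (Nat.succ_ne_zero t)]
  have hnode : ∀ c, ‖B c‖ ≤ max 1 ‖αs c.2‖ ^ P c.1 := fun c => by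
    rw [hB c.1 c.2, norm_pow]
    exact pow_le_pow_left₀ (norm_nonneg _) (le_max_right _ _) _
  have hlead_one : (1 : ℝ) ≤ f.leadingCoeff := by exact_mod_cast hlead
  calc ‖M.det‖ ^ 2
      ≤ ∏ c : Fin (s + 1) × Fin d, ∏ i ∈ range (if c.1 = 0 then k else 1),
          chooseSqSumBound n i * (max 1 ‖αs c.2‖ ^ P c.1) ^ (2 * n) :=
        hMV ▸ Matrix.norm_det_confluentVandermonde_sq_le
          (fun _ => one_le_pow₀ (le_max_left _ _)) hnode e
    _ = ((n : ℝ) ^ (k ^ 2 + s)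
            / ∏ i ∈ range k, ((2 * (i : ℝ) + 1) * (i ! : ℝ) ^ 2)) ^ d
          * (∏ i, max 1 ‖αs i‖) ^ (2 * n * (k + ∑ i ∈ range s, Nat.nth Nat.Prime i)) := by
        rw [prod_prod_range_ite_mul_pow d k s (2 * n) (chooseSqSumBound n)
          (fun j => max 1 ‖αs j‖) P, prod_range_chooseSqSumBound, hP0, hPsum]
        simp [chooseSqSumBound, pow_add, div_mul_eq_mul_div]
    _ ≤ _ := by
        gcongr
        exact le_mul_of_one_le_left (by positivity) hlead_one

/-- **Lemma 8 (Hadamard upper bound).** Let `α` be a non-zero algebraic number of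
degree `d` with minimal polynomial `f(X) = a_d ∏ᵢ (X - αᵢ)` over `ℤ` (`a_d > 0`) and
Mahler measure `M(α) = a_d ∏ᵢ max(1, |αᵢ|)`.  Let `k, s` be positive integers,
`p₁ < ⋯ < p_s` the first `s` primes, `p₀ = 1` and `n = d(k+s)`.  Form the
`d(s+1)`-tuple `β = (α₁^{p₀}, …, α_d^{p₀}, α₁^{p₁}, …, α_d^{p₁}, …, α₁^{p_s}, …,
α_d^{p_s})` with multiplicities `r = (k, …, k, 1, …, 1)`, and let `M` be the
corresponding `n × n` confluent Vandermonde matrix whose column indexed by the pair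
`(c, i)` (with `i < r_c`) has `ℓ`-th entry `C(ℓ, i)·β_c^{ℓ-i}`.  Then
`|V(β,r)|² ≤ (n^{k²+s} / ∏_{i=0}^{k-1} (2i+1)(i!)²)^d · M(α)^{2n(k+p₁+⋯+p_s)}`. -/
theorem confluent_vandermonde_upper_bound
    (α : ℂ) (hα : α ≠ 0)
    (d : ℕ)
    (f : Polynomial ℤ) (hirr : Irreducible f)
    (hroot : Polynomial.aeval α f = 0)
    (hlead : 0 < f.leadingCoeff)
    (hdeg : f.natDegree = d)
    (αs : Fin d → ℂ)
    (hfact : f.map (Int.castRingHom ℂ)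
      = Polynomial.C (f.leadingCoeff : ℂ) * ∏ i, (Polynomial.X - Polynomial.C (αs i)))
    (k s : ℕ) (hk : 0 < k) (hs : 0 < s)
    (P : Fin (s + 1) → ℕ)
    (hP0 : P 0 = 1)
    (hP : ∀ ℓ : Fin (s + 1), (ℓ : ℕ) ≠ 0 → P ℓ = Nat.nth Nat.Prime ((ℓ : ℕ) - 1))
    (B : Fin (s + 1) × Fin d → ℂ) (hB : ∀ ℓ i, B (ℓ, i) = αs i ^ P ℓ)
    (R : Fin (s + 1) × Fin d → ℕ) (hR : ∀ ℓ i, R (ℓ, i) = if ℓ = 0 then k else 1)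
    (n : ℕ) (hn : n = d * (k + s))
    (e : Fin n ≃ (Σ c : Fin (s + 1) × Fin d, Fin (R c)))
    (M : Matrix (Fin n) (Fin n) ℂ)
    (hM : ∀ ℓ c : Fin n, M ℓ c =
      (Nat.choose (ℓ : ℕ) ((e c).2 : ℕ) : ℂ) * B (e c).1 ^ ((ℓ : ℕ) - ((e c).2 : ℕ))) :
    ‖M.det‖ ^ 2
      ≤ ((n : ℝ) ^ (k ^ 2 + s)
            / ∏ i ∈ Finset.range k, ((2 * (i : ℝ) + 1) * (Nat.factorial i : ℝ) ^ 2)) ^ d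
          * ((f.leadingCoeff : ℝ) * ∏ i, max 1 ‖αs i‖)
              ^ (2 * n * (k + ∑ i ∈ Finset.range s, Nat.nth Nat.Prime i)) :=
  confluent_vandermonde_upper_bound_general d f hlead αs k s P hP0 hP B hB R hR n e M hM
end

section
/- Let α be an algebraic integer of degree d with minimal polynomial f ∈ ℤ[X] over ℚ and conjugates α_1, …, α_d, and let p be a prime. Then the rational integer ∏_{i=1}^{d} f(α_i^p) = ∏_{i=1}^{d} ∏_{j=1}^{d} (α_i^p − α_j) is divisible by p^d. -/
open Polynomial

/-!
Frobenius on `𝔽_p[X]` gives `f(X^p) = f^p + p g` for some `g ∈ ℤ[X]`. Since `∏ⱼ (x - αⱼ) = f(x)`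
and `f(αᵢ) = 0`, the product is `∏ᵢ p g(αᵢ) = p^d Res(f, g)`, and the resultant is an integer.
-/

namespace Polynomial

theorem C_dvd_comp_X_pow_sub_pow (f : ℤ[X]) {p : ℕ} (hp : p.Prime) :
    C (p : ℤ) ∣ f.comp (X ^ p) - f ^ p := by
  have := Fact.mk hp
  have hmod : (f.comp (X ^ p) - f ^ p).map (Int.castRingHom (ZMod p)) = 0 := by
    rw [Polynomial.map_sub, map_comp, Polynomial.map_pow, Polynomial.map_pow, map_X, sub_eq_zero,
      ← expand_eq_comp_X_pow, ZMod.expand_card]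
  rw [C_dvd_iff_dvd_coeff]
  intro n
  rw [← ZMod.intCast_zmod_eq_zero_iff_dvd, ← eq_intCast (Int.castRingHom _), ← coeff_map, hmod,
    coeff_zero]

theorem prod_aeval_eq_algebraMap_resultant {R K ι : Type*} [CommRing R] [Field K] [Algebra R K]
    [Fintype ι] {f : R[X]} (hf : f.Monic) {αs : ι → K}
    (hsplit : f.map (algebraMap R K) = ∏ i, (X - C (αs i))) (g : R[X]) :
    ∏ i, aeval (αs i) g = algebraMap R K (f.resultant g) := by
  have hroots : (f.map (algebraMap R K)).roots = Finset.univ.val.map αs := by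
    rw [hsplit, ← roots_multiset_prod_X_sub_C (Finset.univ.val.map αs), Multiset.map_map]
    rfl
  rw [← resultant_map_map, ← hf.natDegree_map (algebraMap R K),
    resultant_eq_prod_eval _ _ _ natDegree_map_le
      (hsplit ▸ Splits.prod fun i _ => Splits.X_sub_C _),
    (hf.map _).leadingCoeff, one_pow, one_mul, hroots, Multiset.map_map]
  simp only [aeval_def, eval_map, Function.comp_apply, Finset.prod_map_val]

theorem prod_prod_pow_sub_eq_pow_mul {K ι : Type*} [Field K] [Fintype ι] {f : ℤ[X]} (hf : f.Monic)
    {αs : ι → K} (hsplit : f.map (Int.castRingHom K) = ∏ i, (X - C (αs i))) {p : ℕ}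
    (hp : p.Prime) :
    ∃ m : ℤ, ∏ i, ∏ j, (αs i ^ p - αs j) = (p : K) ^ Fintype.card ι * m := by
  obtain ⟨g, hg⟩ := C_dvd_comp_X_pow_sub_pow f hp
  have hroot (i : ι) : (f.map (Int.castRingHom K)).eval (αs i) = 0 := by
    rw [hsplit, eval_prod]
    exact Finset.prod_eq_zero (Finset.mem_univ i) (by simp)
  have hinner (i : ι) : ∏ j, (αs i ^ p - αs j) = p * aeval (αs i) g := by
    have hcomp : f.comp (X ^ p) = f ^ p + C (p : ℤ) * g := by rw [← hg]; ring
    calc ∏ j, (αs i ^ p - αs j) = (f.map (Int.castRingHom K)).eval (αs i ^ p) := by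
          simp [hsplit, eval_prod]
      _ = ((f.comp (X ^ p)).map (Int.castRingHom K)).eval (αs i) := by simp [map_comp, eval_comp]
      _ = p * aeval (αs i) g := by
          rw [hcomp]
          simp [hroot i, hp.ne_zero, aeval_def, eval_map]
  refine ⟨f.resultant g, ?_⟩
  rw [Finset.prod_congr rfl fun i _ => hinner i, Finset.prod_mul_distrib, Finset.prod_const,
    Finset.card_univ, prod_aeval_eq_algebraMap_resultant hf hsplit, algebraMap_int_eq,
    eq_intCast]

end Polynomial

theorem prime_power_divides_product_general
    (α : ℂ) (hint : IsIntegral ℤ α)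
    (d : ℕ)
    (αs : Fin d → ℂ)
    (hconj : (minpoly ℤ α).map (Int.castRingHom ℂ)
      = ∏ i, (Polynomial.X - Polynomial.C (αs i)))
    (p : ℕ) (hp : p.Prime) :
    ∃ m : ℤ, (∏ i, ∏ j, (αs i ^ p - αs j)) = ((p : ℂ)) ^ d * (m : ℂ) := by
  simpa only [Fintype.card_fin] using prod_prod_pow_sub_eq_pow_mul (minpoly.monic hint) hconj hp

/-- Let `α` be an algebraic integer of degree `d` with minimal polynomial `f ∈ ℤ[X]`
over `ℚ` and conjugates `α₁, …, α_d`, and let `p` be a prime.  Then the rational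
integer `∏ᵢ f(αᵢ^p) = ∏ᵢ ∏ⱼ (αᵢ^p - αⱼ)` is divisible by `p^d`. -/
theorem prime_power_divides_product
    (α : ℂ) (hint : IsIntegral ℤ α)
    (d : ℕ) (hd : (minpoly ℤ α).natDegree = d)
    (αs : Fin d → ℂ)
    (hconj : (minpoly ℤ α).map (Int.castRingHom ℂ)
      = ∏ i, (Polynomial.X - Polynomial.C (αs i)))
    (p : ℕ) (hp : p.Prime) :
    ∃ m : ℤ, (∏ i, ∏ j, (αs i ^ p - αs j)) = ((p : ℂ)) ^ d * (m : ℂ) :=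
  prime_power_divides_product_general α hint d αs hconj p hp
end

section
/- Let α be a non-zero algebraic integer of degree d which is not a root of unity, with conjugates α_1, …, α_d, and suppose that ℚ(α^p) = ℚ(α) for all primes p. Let p_1 < … < p_s be the first s primes and set p_0 = 1. Then the d(s+1) complex numbers α_i^{p_ℓ}, for 1 ≤ i ≤ d and 0 ≤ ℓ ≤ s, are pairwise distinct: α_i^{p_k} = α_j^{p_ℓ} implies i = j and k = ℓ. -/
/-!
If `ℚ(α ^ p) = ℚ(α)` then `α = g(α ^ p)` for a rational polynomial `g`, and the same identity
holds for every conjugate of `α`; so `p`-th powers of distinct conjugates are distinct.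
A relation `αᵢ ^ a = αⱼ ^ b` with `a ≠ b` is carried by conjugation to every conjugate, so the
sets of `a`-th and of `b`-th powers of the conjugates coincide. Comparing the largest absolute
value `M` on both sides gives `M ^ a = M ^ b`, hence `M ≤ 1`, and by Kronecker's theorem `α`
would be a root of unity.
-/

open Polynomial IntermediateField

theorem mem_rootSet_of_map_eq_prod {R S ι : Type*} [CommRing R] [CommRing S] [IsDomain S]
    [Algebra R S] [Fintype ι] {f : R[X]} {v : ι → S}
    (hf : f.map (algebraMap R S) = ∏ i, (X - C (v i))) (i : ι) : v i ∈ f.rootSet S := by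
  refine mem_rootSet'.mpr ⟨?_, ?_⟩
  · rw [hf]
    exact (monic_prod_of_monic _ _ fun i _ => monic_X_sub_C (v i)).ne_zero
  · rw [aeval_def, ← eval_map, hf, eval_prod]
    exact Finset.prod_eq_zero (Finset.mem_univ i) (by simp)

section Conjugates

variable {K L : Type*} [Field K] [Field L] [Algebra K L]

theorem injOn_pow_rootSet_minpoly_of_mem_adjoin_pow {α : L} {p : ℕ} (hα : IsIntegral K α)
    (hmem : α ∈ K⟮α ^ p⟯) : Set.InjOn (· ^ p) ((minpoly K α).rootSet L) := by
  obtain ⟨g, hg⟩ : ∃ g : K[X], aeval (α ^ p) g = α := by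
    rwa [← mem_toSubalgebra, adjoin_simple_toSubalgebra_of_isAlgebraic (hα.pow p).isAlgebraic,
      Algebra.adjoin_singleton_eq_range_aeval] at hmem
  -- `g(X ^ p) - X` vanishes at `α`, hence at all its conjugates.
  have hinv : ∀ z ∈ (minpoly K α).rootSet L, aeval (z ^ p) g = z := by
    intro z hz
    have hdvd : minpoly K α ∣ g.comp (X ^ p) - X :=
      minpoly.dvd K α (by simp [aeval_comp, hg])
    have := aeval_eq_zero_of_dvd_aeval_eq_zero hdvd (mem_rootSet.mp hz).2
    simpa [aeval_comp, sub_eq_zero] using this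
  intro x hx y hy hxy
  rw [← hinv x hx, ← hinv y hy]
  exact congrArg (aeval · g) hxy

theorem exists_mem_rootSet_pow_eq_pow [IsAlgClosed L] {x y z : L} {a b : ℕ}
    (hx : IsIntegral K x) (hy : IsIntegral K y) (h : x ^ a = y ^ b)
    (hz : z ∈ (minpoly K x).rootSet L) : ∃ w ∈ (minpoly K y).rootSet L, z ^ a = w ^ b := by
  have hxy : ∀ s ∈ ({x, y} : Set L), IsIntegral K s ∧ ((minpoly K s).map (algebraMap K L)).Splits :=
    fun s hs => ⟨by rcases hs with rfl | rfl <;> assumption, IsAlgClosed.splits _⟩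
  set x' : K⟮x, y⟯ := ⟨x, subset_adjoin K _ (by simp)⟩
  set y' : K⟮x, y⟯ := ⟨y, subset_adjoin K _ (by simp)⟩
  obtain ⟨φ, hφ⟩ := exists_algHom_adjoin_of_splits_of_aeval hxy x'.2 (mem_rootSet.mp hz).2
  refine ⟨φ y', mem_rootSet.mpr ⟨minpoly.ne_zero hy, ?_⟩, ?_⟩
  · rw [show minpoly K y = minpoly K y' from (minpoly_eq y').symm, aeval_algHom_apply,
      minpoly.aeval, map_zero]
  · have : x' ^ a = y' ^ b := Subtype.ext h
    rw [← hφ, ← map_pow, this, map_pow]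

theorem minpoly_eq_of_mem_rootSet_minpoly {α x : L} (hα : IsIntegral K α)
    (hx : x ∈ (minpoly K α).rootSet L) : minpoly K x = minpoly K α :=
  (minpoly.eq_of_irreducible_of_monic (minpoly.irreducible hα) (mem_rootSet.mp hx).2
    (minpoly.monic hα)).symm

theorem image_pow_rootSet_minpoly_subset [IsAlgClosed L] {α x y : L} {a b : ℕ}
    (hα : IsIntegral K α) (hx : x ∈ (minpoly K α).rootSet L) (hy : y ∈ (minpoly K α).rootSet L)
    (h : x ^ a = y ^ b) :
    (· ^ a) '' (minpoly K α).rootSet L ⊆ (· ^ b) '' (minpoly K α).rootSet L := by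
  have hint {z : L} (hz : z ∈ (minpoly K α).rootSet L) : IsIntegral K z :=
    ⟨minpoly K α, minpoly.monic hα, (mem_rootSet.mp hz).2⟩
  rintro _ ⟨z, hz, rfl⟩
  rw [← minpoly_eq_of_mem_rootSet_minpoly hα hx] at hz
  obtain ⟨w, hw, hzw⟩ := exists_mem_rootSet_pow_eq_pow (hint hx) (hint hy) h hz
  exact ⟨w, minpoly_eq_of_mem_rootSet_minpoly hα hy ▸ hw, hzw.symm⟩

end Conjugates

theorem norm_le_one_of_image_pow_eq {𝕜 : Type*} [NormedDivisionRing 𝕜] {S : Set 𝕜}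
    (hS : S.Finite) {a b : ℕ} (hab : a ≠ b) (h : (· ^ a) '' S = (· ^ b) '' S) {x : 𝕜}
    (hx : x ∈ S) : ‖x‖ ≤ 1 := by
  obtain ⟨m, hm, hmax⟩ := Set.exists_max_image S (‖·‖) hS ⟨x, hx⟩
  have hle : ∀ {c d : ℕ}, (· ^ c) '' S ⊆ (· ^ d) '' S → ‖m‖ ^ c ≤ ‖m‖ ^ d := by
    intro c d hcd
    obtain ⟨y, hy, hym⟩ := hcd ⟨m, hm, rfl⟩
    calc ‖m‖ ^ c = ‖y‖ ^ d := by simp only at hym; rw [← norm_pow, ← norm_pow, hym]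
      _ ≤ ‖m‖ ^ d := pow_le_pow_left₀ (norm_nonneg y) (hmax y hy) d
  have hpow : ‖m‖ ^ a = ‖m‖ ^ b := (hle h.le).antisymm (hle h.ge)
  refine (hmax x hx).trans (not_lt.mp fun hm1 => hab ?_)
  exact (pow_right_inj₀ (zero_lt_one.trans hm1) hm1.ne').mp hpow

theorem exists_pow_eq_one_of_norm_rootSet_le_one {α : ℂ} (hα : α ≠ 0) (hint : IsIntegral ℤ α)
    (h : ∀ z ∈ (minpoly ℚ α).rootSet ℂ, ‖z‖ ≤ 1) : ∃ n, 0 < n ∧ α ^ n = 1 := by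
  have hQ : IsIntegral ℚ α := hint.tower_top
  have : FiniteDimensional ℚ ℚ⟮α⟯ := adjoin.finiteDimensional hQ
  have : NumberField ℚ⟮α⟯ := ⟨⟩
  have hroot : ∀ φ : ℚ⟮α⟯ →+* ℂ, φ (AdjoinSimple.gen ℚ α) ∈ (minpoly ℚ α).rootSet ℂ := by
    intro φ
    have := congrArg φ.toRatAlgHom (aeval_gen_minpoly ℚ α)
    rw [map_zero, ← aeval_algHom_apply] at this
    exact mem_rootSet.mpr ⟨minpoly.ne_zero hQ, this⟩
  obtain ⟨n, hn, hαn⟩ := NumberField.Embeddings.pow_eq_one_of_norm_le_one ℚ⟮α⟯ ℂ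
    (x := AdjoinSimple.gen ℚ α) (Subtype.coe_ne_coe.mp hα) (coe_isIntegral_iff.mp hint)
    fun φ => h _ (hroot φ)
  exact ⟨n, hn, by simpa using congrArg (algebraMap ℚ⟮α⟯ ℂ) hαn⟩

section FirstPrimes

variable {s : ℕ} {P : Fin (s + 1) → ℕ} (hP0 : P 0 = 1)
  (hP : ∀ ℓ : Fin (s + 1), (ℓ : ℕ) ≠ 0 → P ℓ = Nat.nth Nat.Prime ((ℓ : ℕ) - 1))
include hP

theorem prime_of_eq_nth_prime {ℓ : Fin (s + 1)} (hℓ : ℓ ≠ 0) : (P ℓ).Prime :=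
  hP ℓ (Fin.val_ne_zero_iff.mpr hℓ) ▸ Nat.prime_nth_prime _

include hP0

theorem eq_one_or_prime_of_eq_nth_prime (ℓ : Fin (s + 1)) : P ℓ = 1 ∨ (P ℓ).Prime := by
  rcases eq_or_ne ℓ 0 with rfl | hℓ
  exacts [.inl hP0, .inr (prime_of_eq_nth_prime hP hℓ)]

theorem injective_of_eq_nth_prime : Function.Injective P := by
  intro k l hkl
  rcases eq_or_ne k 0 with rfl | hk <;> rcases eq_or_ne l 0 with rfl | hl
  · rfl
  · exact absurd (hP0 ▸ hkl) (prime_of_eq_nth_prime hP hl).one_lt.ne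
  · exact absurd (hP0 ▸ hkl) (prime_of_eq_nth_prime hP hk).one_lt.ne'
  · rw [← Fin.val_ne_zero_iff] at hk hl
    rw [hP k hk, hP l hl] at hkl
    have := Nat.nth_injective Nat.infinite_setOfPred_prime hkl
    exact Fin.ext (by omega)

end FirstPrimes

theorem powers_of_conjugates_distinct_general
    (α : ℂ) (hα : α ≠ 0) (hint : IsIntegral ℤ α)
    (hunit : ¬∃ n : ℕ, 0 < n ∧ α ^ n = 1)
    (d : ℕ)
    (αs : Fin d → ℂ)
    (hconj : (minpoly ℚ α).map (algebraMap ℚ ℂ)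
      = ∏ i, (Polynomial.X - Polynomial.C (αs i)))
    (hfields : ∀ p : ℕ, p.Prime →
      IntermediateField.adjoin ℚ {α ^ p} = IntermediateField.adjoin ℚ {α})
    (s : ℕ) (P : Fin (s + 1) → ℕ)
    (hP0 : P 0 = 1)
    (hP : ∀ ℓ : Fin (s + 1), (ℓ : ℕ) ≠ 0 → P ℓ = Nat.nth Nat.Prime ((ℓ : ℕ) - 1))
    (i j : Fin d) (k l : Fin (s + 1))
    (h : αs i ^ P k = αs j ^ P l) :
    i = j ∧ k = l := by
  have hQ : IsIntegral ℚ α := hint.tower_top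
  have hαs : Function.Injective αs :=
    separable_prod_X_sub_C_iff.mp (hconj ▸ (minpoly.irreducible hQ).separable.map)
  have hroot : ∀ m, αs m ∈ (minpoly ℚ α).rootSet ℂ := mem_rootSet_of_map_eq_prod hconj
  by_cases hkl : k = l
  · subst hkl
    have hmem : α ∈ ℚ⟮α ^ P k⟯ := by
      rcases eq_one_or_prime_of_eq_nth_prime hP0 hP k with hk | hk
      · simpa [hk] using mem_adjoin_simple_self ℚ α
      · exact hfields _ hk ▸ mem_adjoin_simple_self ℚ α
    exact ⟨hαs (injOn_pow_rootSet_minpoly_of_mem_adjoin_pow hQ hmem (hroot i) (hroot j) h), rfl⟩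
  · have hPkl : P k ≠ P l := fun e => hkl (injective_of_eq_nth_prime hP0 hP e)
    have himage := (image_pow_rootSet_minpoly_subset hQ (hroot i) (hroot j) h).antisymm
      (image_pow_rootSet_minpoly_subset hQ (hroot j) (hroot i) h.symm)
    exact absurd (exists_pow_eq_one_of_norm_rootSet_le_one hα hint fun z hz =>
      norm_le_one_of_image_pow_eq (rootSet_finite _ _) hPkl himage hz) hunit

/-- Let `α` be a non-zero algebraic integer of degree `d` which is not a root of
unity, with conjugates `α₁, …, α_d`, and suppose `ℚ(α^p) = ℚ(α)` for all primes `p`.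
Let `p₁ < ⋯ < p_s` be the first `s` primes and `p₀ = 1`.  Then the `d(s+1)` numbers
`αᵢ^{p_ℓ}` (for `1 ≤ i ≤ d`, `0 ≤ ℓ ≤ s`) are pairwise distinct:
`αᵢ^{p_k} = αⱼ^{p_ℓ}` implies `i = j` and `k = ℓ`. -/
theorem powers_of_conjugates_distinct
    (α : ℂ) (hα : α ≠ 0) (hint : IsIntegral ℤ α)
    (hunit : ¬∃ n : ℕ, 0 < n ∧ α ^ n = 1)
    (d : ℕ) (hd : (minpoly ℚ α).natDegree = d)
    (αs : Fin d → ℂ)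
    (hconj : (minpoly ℚ α).map (algebraMap ℚ ℂ)
      = ∏ i, (Polynomial.X - Polynomial.C (αs i)))
    (hfields : ∀ p : ℕ, p.Prime →
      IntermediateField.adjoin ℚ {α ^ p} = IntermediateField.adjoin ℚ {α})
    (s : ℕ) (P : Fin (s + 1) → ℕ)
    (hP0 : P 0 = 1)
    (hP : ∀ ℓ : Fin (s + 1), (ℓ : ℕ) ≠ 0 → P ℓ = Nat.nth Nat.Prime ((ℓ : ℕ) - 1))
    (i j : Fin d) (k l : Fin (s + 1))
    (h : αs i ^ P k = αs j ^ P l) :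
    i = j ∧ k = l :=
  powers_of_conjugates_distinct_general α hα hint hunit d αs hconj hfields s P hP0 hP i j k l h
end

section
/- For all real numbers d > 10000, 1.2 ≤ s₁ ≤ 1.51 and 1.2 ≤ k₁ ≤ 1.05·s₁, the quantity g(k₁, s₁, d) = (2·log log log d − log s₁)/(2·log log d) − k₁·(log log d)²/(1.128·s₁²·(log d)³) − k₁·(log log d)/(s₁·log d) is positive. -/
/-!
Write `L = log d`, `u = log L` and `w = log u`, so `L ≥ 9.2`, `u ≥ 2.2191`, `w ≥ 0.797`, and
`log s₁ ≤ log 1.51 < 0.4122`. The first term is then at least `1.1818 / (2u)`, while `k₁ ≤ 1.05 s₁`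
bounds the two subtracted terms by `(0.047 + 1.05 u) / L`. Since `L = exp u` dominates every
polynomial in `u` (already its Taylor polynomial of degree six suffices for `u ≥ 2.2191`),
this is smaller than `1.1818 / (2u)`.
-/

open Real

section LogBounds

lemma mul_log_two_add_one_sub_le_mul_log {x : ℝ} (hx : 0 < x) (m n : ℕ) :
    m * log 2 + (1 - 2 ^ m / x ^ n) ≤ n * log x := by
  have h := one_sub_inv_le_log_of_pos (x := x ^ n / 2 ^ m) (by positivity)
  rw [inv_div, log_div (by positivity) (by positivity), log_pow, log_pow] at h
  linarith

lemma mul_log_le_mul_log_two_add_sub_one {x : ℝ} (hx : 0 < x) (m n : ℕ) :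
    n * log x ≤ m * log 2 + (x ^ n / 2 ^ m - 1) := by
  have h := log_le_sub_one_of_pos (x := x ^ n / 2 ^ m) (by positivity)
  rw [log_div (by positivity) (by positivity), log_pow, log_pow] at h
  linarith

lemma log_10000_ge : (9.2 : ℝ) ≤ log 10000 := by
  have h := mul_log_two_add_one_sub_le_mul_log (x := 10000) (by norm_num) 40 3
  norm_num at h
  linarith [log_two_gt_d9]

lemma log_9_2_ge : (2.2191 : ℝ) ≤ log 9.2 := by
  have h := mul_log_two_add_one_sub_le_mul_log (x := 9.2) (by norm_num) 16 5
  norm_num at h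
  linarith [log_two_gt_d9]

lemma log_2_2191_ge : (0.797 : ℝ) ≤ log 2.2191 := by
  have h := mul_log_two_add_one_sub_le_mul_log (x := 2.2191) (by norm_num) 8 7
  norm_num at h
  linarith [log_two_gt_d9]

lemma log_1_51_le : log 1.51 ≤ (0.4122 : ℝ) := by
  have h := mul_log_le_mul_log_two_add_sub_one (x := 1.51) (by norm_num) 3 5
  norm_num at h
  linarith [log_two_lt_d9]

end LogBounds

section ExpBounds

lemma taylor_six_le_exp {x : ℝ} (hx : 0 ≤ x) :
    1 + x + x ^ 2 / 2 + x ^ 3 / 6 + x ^ 4 / 24 + x ^ 5 / 120 + x ^ 6 / 720 ≤ exp x := by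
  have h := sum_le_exp_of_nonneg hx 7
  norm_num [Finset.sum_range_succ, Nat.factorial] at h
  linarith

variable {u : ℝ} (hu : 2.2191 ≤ u)
include hu

lemma sq_le_exp_of_ge : 1.811 * u ^ 2 ≤ exp u := by
  have hv : 0 ≤ u - 2.2191 := by linarith
  nlinarith [taylor_six_le_exp (by linarith : (0 : ℝ) ≤ u), pow_nonneg hv 2, pow_nonneg hv 3,
    pow_nonneg hv 4, pow_nonneg hv 5, pow_nonneg hv 6]

lemma affine_div_exp_lt_div_of_ge : (0.047 + 1.05 * u) / exp u < 1.1818 / (2 * u) := by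
  have hv : 0 ≤ u - 2.2191 := by linarith
  have hpoly : 1.05 * u ^ 2 + 0.047 * u + 0.1 ≤ 0.5909 * exp u := by
    nlinarith [taylor_six_le_exp (by linarith : (0 : ℝ) ≤ u), pow_nonneg hv 2, pow_nonneg hv 3,
      pow_nonneg hv 4, pow_nonneg hv 5, pow_nonneg hv 6]
  rw [div_lt_div_iff₀ (exp_pos u) (by linarith)]
  nlinarith

end ExpBounds

section ErrorTerms

variable {k s L u : ℝ} (hs : 1.2 ≤ s) (hk : k ≤ 1.05 * s) (hL : 9.2 ≤ L)
include hs hk hL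

lemma cube_term_le (huL : 1.811 * u ^ 2 ≤ L) :
    k * u ^ 2 / (1.128 * s ^ 2 * L ^ 3) ≤ 0.047 / L := by
  have hL0 : 0 < L := by linarith
  rw [div_le_div_iff₀ (by positivity) hL0]
  have hk' : k * (u ^ 2 * L) ≤ 1.05 * s * (u ^ 2 * L) := by gcongr
  have huL' : 1.811 * u ^ 2 * (1.05 * s * L) ≤ L * (1.05 * s * L) := by gcongr
  have hsL : 11.04 ≤ s * L := by nlinarith
  have hsL' : 11.04 * (s * L ^ 2) ≤ s * L * (s * L ^ 2) := by gcongr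
  nlinarith [pow_pos hL0 3, sq_nonneg s]

lemma linear_term_le (hu : 0 ≤ u) : k * u / (s * L) ≤ 1.05 * u / L := by
  have hL0 : 0 < L := by linarith
  rw [div_le_div_iff₀ (by positivity) hL0]
  have hk' : k * (u * L) ≤ 1.05 * s * (u * L) := by gcongr
  linarith

end ErrorTerms

theorem g_positive_general (d k₁ s₁ : ℝ) (hd : 10000 < d)
    (hs₁ : 1.2 ≤ s₁) (hs₁' : s₁ ≤ 1.51) (hk₁' : k₁ ≤ 1.05 * s₁) :
    0 < (2 * Real.log (Real.log (Real.log d)) - Real.log s₁)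
          / (2 * Real.log (Real.log d))
        - k₁ * (Real.log (Real.log d)) ^ 2 / (1.128 * s₁ ^ 2 * (Real.log d) ^ 3)
        - k₁ * Real.log (Real.log d) / (s₁ * Real.log d) := by
  set L := log d
  set u := log L
  have hL : 9.2 ≤ L := log_10000_ge.trans (log_le_log (by norm_num) hd.le)
  have hu : 2.2191 ≤ u := log_9_2_ge.trans (log_le_log (by norm_num) hL)
  have hw : 0.797 ≤ log u := log_2_2191_ge.trans (log_le_log (by norm_num) hu)
  have hs : log s₁ ≤ 0.4122 := (log_le_log (by linarith) hs₁').trans log_1_51_le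
  have hexp : exp u = L := exp_log (by linarith)
  have hmain : 1.1818 / (2 * u) ≤ (2 * log u - log s₁) / (2 * u) := by
    gcongr
    linarith
  have hcube := cube_term_le hs₁ hk₁' hL (hexp ▸ sq_le_exp_of_ge hu)
  have hlin := linear_term_le hs₁ hk₁' hL (by linarith : 0 ≤ u)
  have hgap := hexp ▸ affine_div_exp_lt_div_of_ge hu
  rw [add_div] at hgap
  linarith

/-- For all real `d > 10000`, `1.2 ≤ s₁ ≤ 1.51` and `1.2 ≤ k₁ ≤ 1.05 s₁`, the quantity
`g(k₁,s₁,d) = (2 logloglog d - log s₁)/(2 loglog d) - k₁ (loglog d)²/(1.128 s₁² (log d)³)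
  - k₁ (loglog d)/(s₁ log d)` is positive. -/
theorem g_positive (d k₁ s₁ : ℝ) (hd : 10000 < d)
    (hs₁ : 1.2 ≤ s₁) (hs₁' : s₁ ≤ 1.51) (hk₁ : 1.2 ≤ k₁) (hk₁' : k₁ ≤ 1.05 * s₁) :
    0 < (2 * Real.log (Real.log (Real.log d)) - Real.log s₁)
          / (2 * Real.log (Real.log d))
        - k₁ * (Real.log (Real.log d)) ^ 2 / (1.128 * s₁ ^ 2 * (Real.log d) ^ 3)
        - k₁ * Real.log (Real.log d) / (s₁ * Real.log d) :=
  g_positive_general d k₁ s₁ hd hs₁ hs₁' hk₁'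
end

section
/- For all real numbers k₁ and s₁ with 1.26 ≤ k₁ ≤ 1.51 and k₁ − 0.06 ≤ s₁ ≤ k₁, one has (2.528·k₁·s₁ − k₁² − s₁)/(2.256·s₁³) > 1/4. -/
/-- For all real `k₁, s₁` with `1.26 ≤ k₁ ≤ 1.51` and `k₁ - 0.06 ≤ s₁ ≤ k₁`, one has
`(2.528 k₁ s₁ - k₁² - s₁)/(2.256 s₁³) > 1/4`. -/
theorem f_gt_quarter (k₁ s₁ : ℝ) (hk₁ : 1.26 ≤ k₁) (hk₁' : k₁ ≤ 1.51)
    (hs₁ : k₁ - 0.06 ≤ s₁) (hs₁' : s₁ ≤ k₁) :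
    1 / 4 < (2.528 * k₁ * s₁ - k₁ ^ 2 - s₁) / (2.256 * s₁ ^ 3) := by
  have hs : (1.2:ℝ) ≤ s₁ := by linarith
  have hpos : (0:ℝ) < 2.256 * s₁ ^ 3 := by positivity
  rw [lt_div_iff₀ hpos]
  nlinarith [sq_nonneg (k₁ - s₁), sq_nonneg (s₁ - 1.385), sq_nonneg (k₁ - 1.385), mul_nonneg (sub_nonneg.2 hs₁') (sub_nonneg.2 hs), sq_nonneg (s₁ - 1.2), mul_nonneg (mul_nonneg (sub_nonneg.2 hs₁') (sub_nonneg.2 hs)) (sub_nonneg.2 hs), sq_nonneg (k₁*s₁ - 2)]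
end
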